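/- arXiv:1511.08123 — 5 statements merged into one kernel-verified Lean document; each statement's English description precedes it below -/
import Mathlib

section
/- If a reduced Gröbner basis of an ideal in K[x_1,...,x_n] has degree at most e (i.e., every element has total degree at most e), then it contains at most binomial(e+n-1, n-1) polynomials. -/
/-!
Pad each monomial with a power of one fixed variable up to total degree `e`. Two monomials with
the same padding differ only in that variable, hence are comparable; so padding is injective on an
antichain, which is therefore no larger than the set of monomials of degree exactly `e` in `n`
variables, of size `(e + n - 1).choose (n - 1)`.
-/

namespace Finsupp

theorem le_total_of_eq_off {ι M : Type*} [Zero M] [LinearOrder M] {f g : ι →₀ M} (i : ι)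
    (h : ∀ j ≠ i, f j = g j) : f ≤ g ∨ g ≤ f := by
  rcases le_total (f i) (g i) with hi | hi
  · refine .inl fun j => ?_
    by_cases hj : j = i
    · exact hj ▸ hi
    · exact (h j hj).le
  · refine .inr fun j => ?_
    by_cases hj : j = i
    · exact hj ▸ hi
    · exact (h j hj).ge

variable {σ : Type*}

noncomputable def homogenize (i : σ) (e : ℕ) (m : σ →₀ ℕ) : σ →₀ ℕ :=
  m + single i (e - m.degree)

theorem degree_homogenize {i : σ} {e : ℕ} {m : σ →₀ ℕ} (hm : m.degree ≤ e) :
    (homogenize i e m).degree = e := by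
  rw [homogenize, map_add, degree_single]
  omega

theorem le_total_of_homogenize_eq {i : σ} {e : ℕ} {m m' : σ →₀ ℕ}
    (h : homogenize i e m = homogenize i e m') : m ≤ m' ∨ m' ≤ m :=
  le_total_of_eq_off i fun j hj => by
    simpa [homogenize, single_eq_of_ne hj] using DFunLike.congr_fun h j

theorem injOn_homogenize_of_isAntichain (i : σ) (e : ℕ) {S : Set (σ →₀ ℕ)}
    (hS : IsAntichain (· ≤ ·) S) : S.InjOn (homogenize i e) := by
  intro m hm m' hm' h
  by_contra hne
  rcases le_total_of_homogenize_eq h with hle | hle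
  · exact hS hm hm' hne hle
  · exact hS hm' hm (Ne.symm hne) hle

theorem card_le_choose_of_isAntichain [Fintype σ] [DecidableEq σ] (i : σ) {e : ℕ}
    {S : Finset (σ →₀ ℕ)} (hdeg : ∀ m ∈ S, m.degree ≤ e) (hS : IsAntichain (· ≤ ·) (S : Set (σ →₀ ℕ))) :
    S.card ≤ (Fintype.card σ + e - 1).choose e := by
  rw [← Finset.card_univ, ← Finset.card_finsuppAntidiag_nat_eq_choose]
  refine Finset.card_le_card_of_injOn (homogenize i e) (fun m hm => ?_)
    (injOn_homogenize_of_isAntichain i e hS)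
  rw [Finset.mem_coe, Finset.mem_finsuppAntidiag, ← degree_eq_sum]
  exact ⟨degree_homogenize (hdeg m hm), Finset.subset_univ _⟩

end Finsupp

/-- A reduced Gröbner basis of degree at most `e` contains at most
`(e+n-1).choose (n-1)` polynomials: any set of monomials (exponent vectors)
in `n` variables, each of total degree at most `e`, that is an antichain
under divisibility, has cardinality at most `(e+n-1).choose (n-1)`. -/
theorem antichain_of_monomials_card_le (n e : ℕ)
    (S : Finset (Fin n →₀ ℕ))
    (hdeg : ∀ m ∈ S, (m.sum fun _ a => a) ≤ e)
    (hantichain : ∀ m ∈ S, ∀ m' ∈ S, m ≠ m' → ¬ m ≤ m') :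
    S.card ≤ (e + n - 1).choose (n - 1) := by
  cases n with
  | zero => simpa using Finset.card_le_one_of_subsingleton S
  | succ k =>
    calc S.card ≤ (Fintype.card (Fin (k + 1)) + e - 1).choose e :=
          Finsupp.card_le_choose_of_isAntichain 0 hdeg hantichain
      _ = (e + (k + 1) - 1).choose (k + 1 - 1) := by
          rw [Fintype.card_fin, show k + 1 + e - 1 = k + e by omega,
            show e + (k + 1) - 1 = k + e by omega, Nat.add_sub_cancel, Nat.choose_symm_add]
end

section
/- Let J be a homogeneous ideal in K[x_1,...,x_n] and let H be a universal Gröbner basis of J. Then the saturation exponent α of J with respect to the product x_1⋯x_n satisfies α ≤ deg H, where deg H is the maximal total degree of an element of H. -/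
open MvPolynomial

variable {n : ℕ} {K : Type*} [Field K]

/-- The leading exponent (multidegree) of a polynomial with respect to a
monomial order. -/
noncomputable def leadExp (m : MonomialOrder (Fin n)) (p : MvPolynomial (Fin n) K) :
    Fin n →₀ ℕ :=
  m.toSyn.symm (p.support.sup (⇑m.toSyn))

/-- `G` is a Gröbner basis of the ideal `I` with respect to the monomial order
`m`: it is a finite subset of `I` generating `I` such that the leading monomial
of every nonzero element of `I` is divisible by the leading monomial of some
nonzero element of `G`. -/
def IsGroebnerBasis (m : MonomialOrder (Fin n)) (I : Ideal (MvPolynomial (Fin n) K))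
    (G : Finset (MvPolynomial (Fin n) K)) : Prop :=
  ↑G ⊆ (I : Set (MvPolynomial (Fin n) K)) ∧ Ideal.span ↑G = I ∧
    ∀ f ∈ I, f ≠ 0 → ∃ g ∈ G, g ≠ 0 ∧ leadExp m g ≤ leadExp m f

/-!
Fix a variable `xᵢ` and order monomials first by their degree in the other variables, breaking
ties by any monomial order. On a homogeneous polynomial this order picks as leading monomial one
with the least power of `xᵢ`, so a homogeneous `g` with leading exponent `w` is divisible by
`xᵢ ^ wᵢ`, where `wᵢ ≤ deg g`. As `J` is homogeneous, replacing each `g ∈ H` by its homogeneous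
component through the leading monomial keeps the Gröbner property for this order, in degrees at
most `D = deg H`. Reducing an `h ∈ J` divisible by `xᵢ ^ (D + 1)` by one of them subtracts a
multiple of `xᵢ g` that is itself divisible by `xᵢ ^ (D + 1)`, so by induction on the leading
monomial `J ∩ (xᵢ ^ (D + 1)) ⊆ xᵢ J`, that is, `J : xᵢ ^ (D + 1) = J : xᵢ ^ D`. Removing one variable at a time gives the same for `x₁⋯xₙ`, and
then the chain `J : (x₁⋯xₙ) ^ k` is constant from `k = D` on.
-/

universe u

namespace MonomialOrder

variable {σ : Type*}

/-- `syn` is a `ULift` so that the order exists in every universe: a universal Gröbner basis is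
one for the orders whose `syn` lives in an arbitrary universe. -/
noncomputable def comap {M : Type*} [AddCommMonoid M] [LinearOrder M] [IsOrderedAddMonoid M]
    [WellFoundedLT M] (f : (σ →₀ ℕ) →+ M) (hf : Function.Injective f) (hmono : Monotone f) :
    MonomialOrder.{_, max u _} σ :=
  let lo : LinearOrder (ULift.{u} (σ →₀ ℕ)) :=
    LinearOrder.lift' (f ∘ ULift.down) (hf.comp ULift.down_injective)
  { syn := ULift.{u} (σ →₀ ℕ)
    linearOrderSyn := lo
    isOrderedAddMonoid_syn := @IsOrderedAddMonoid.mk _ _ lo.toPreorder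
      (fun a b (hab : f a.down ≤ f b.down) c => show f (a.down + c.down) ≤ f (b.down + c.down) by
        rw [map_add, map_add]; exact add_le_add_left hab _)
      (fun a b (hab : f a.down ≤ f b.down) c => show f (c.down + a.down) ≤ f (c.down + b.down) by
        rw [map_add, map_add]; exact add_le_add_right hab _)
    toSyn := AddEquiv.ulift.symm
    toSyn_monotone := fun _ _ h => hmono h
    wellFoundedLT_syn := ⟨InvImage.wf (f ∘ ULift.down) wellFounded_lt⟩ }

theorem toSyn_comap_le_iff {M : Type*} [AddCommMonoid M] [LinearOrder M] [IsOrderedAddMonoid M]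
    [WellFoundedLT M] {f : (σ →₀ ℕ) →+ M} {hf : Function.Injective f} {hmono : Monotone f}
    {a b : σ →₀ ℕ} :
    (comap.{u} f hf hmono).toSyn a ≤ (comap f hf hmono).toSyn b ↔ f a ≤ f b :=
  Iff.rfl

noncomputable def byWeight (w : σ → ℕ) (m : MonomialOrder σ) : MonomialOrder.{_, max u _} σ :=
  comap.{u}
    { toFun := fun a => toLex (Finsupp.weight w a, m.toSyn a)
      map_zero' := by simp
      map_add' := fun a b => by simp only [map_add]; rfl }
    (fun a b h => m.toSyn.injective (congrArg (fun x => (ofLex x).2) h))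
    fun a b h => by
      obtain ⟨c, rfl⟩ := exists_add_of_le h
      exact Prod.Lex.toLex_mono ⟨by simp, m.toSyn_monotone h⟩

theorem weight_le_weight_of_toSyn_byWeight_le {w : σ → ℕ} {m : MonomialOrder σ} {a b : σ →₀ ℕ}
    (h : (byWeight.{u} w m).toSyn a ≤ (byWeight w m).toSyn b) :
    Finsupp.weight w a ≤ Finsupp.weight w b :=
  Prod.Lex.monotone_fst _ _ (toSyn_comap_le_iff.mp h)

theorem degree_homogeneousComponent_degree {R : Type*} [CommSemiring R] (m : MonomialOrder σ)
    (p : MvPolynomial σ R) :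
    m.degree (homogeneousComponent (m.degree p).degree p) = m.degree p := by
  by_cases hp : p = 0
  · simp [hp]
  have hcoeff : coeff (m.degree p) (homogeneousComponent (m.degree p).degree p) =
      coeff (m.degree p) p := by
    rw [coeff_homogeneousComponent, if_pos rfl]
  have hsub : (homogeneousComponent (m.degree p).degree p).support ⊆ p.support := fun a ha => by
    rw [mem_support_iff, coeff_homogeneousComponent] at ha
    exact mem_support_iff.mpr fun h => ha (by simp [h])
  refine m.toSyn.injective (le_antisymm (m.degree_le_degree_of_support_subset hsub)
    (m.le_degree ?_))
  rw [mem_support_iff, hcoeff]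
  exact m.coeff_degree_ne_zero_iff.mpr hp

end MonomialOrder

theorem Finsupp.degree_eq_add_weight_update {σ : Type*} [Fintype σ] [DecidableEq σ]
    (a : σ →₀ ℕ) (i : σ) : a.degree = a i + Finsupp.weight (Function.update 1 i 0) a := by
  rw [Finsupp.degree_eq_sum, Finsupp.weight_eq_sum, ← Finset.add_sum_erase _ _ (Finset.mem_univ i),
    ← Finset.add_sum_erase _ _ (Finset.mem_univ i)]
  simp only [Function.update_self, smul_zero, zero_add]
  congr 1
  refine Finset.sum_congr rfl fun j hj => ?_
  simp [Function.update_of_ne (Finset.ne_of_mem_erase hj)]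

namespace MvPolynomial

variable {σ : Type*}

theorem X_pow_dvd_iff {R : Type*} [CommSemiring R] {i : σ} {k : ℕ} {p : MvPolynomial σ R} :
    X i ^ k ∣ p ↔ ∀ a ∈ p.support, k ≤ a i := by
  classical
  constructor
  · rintro ⟨q, rfl⟩ a ha
    rw [mem_support_iff, X_pow_eq_monomial, coeff_monomial_mul'] at ha
    exact Finsupp.single_le_iff.mp (of_not_not fun h => ha (if_neg h))
  · intro h
    rw [p.as_sum]
    refine Finset.dvd_sum fun a ha => ?_
    rw [X_pow_eq_monomial, monomial_dvd_monomial]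
    exact ⟨Or.inr (Finsupp.single_le_iff.mpr (h a ha)), one_dvd _⟩

theorem X_pow_degree_byWeight_dvd {R : Type*} [CommSemiring R] [Fintype σ] [DecidableEq σ]
    (m : MonomialOrder σ) (i : σ) {p : MvPolynomial σ R} {d : ℕ} (hp : p.IsHomogeneous d) :
    X i ^ ((m.byWeight.{u} (Function.update 1 i 0)).degree p i) ∣ p := by
  set m' := m.byWeight.{u} (Function.update 1 i 0)
  rw [X_pow_dvd_iff]
  intro a ha
  have hweight := MonomialOrder.weight_le_weight_of_toSyn_byWeight_le (m'.le_degree ha)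
  have hdeg : a.degree = (m'.degree p).degree := by
    rw [Finsupp.degree_eq_weight_one]
    exact (hp (mem_support_iff.mp ha)).trans
      (hp (mem_support_iff.mp (m'.degree_mem_support (support_nonempty.mp ⟨a, ha⟩)))).symm
  rw [Finsupp.degree_eq_add_weight_update _ i, Finsupp.degree_eq_add_weight_update _ i] at hdeg
  omega

section GroebnerReduction

variable {J : Ideal (MvPolynomial σ K)} {m : MonomialOrder σ} {i : σ} {D : ℕ}

theorem exists_eq_X_mul_of_X_pow_dvd
    (hm : ∀ {p : MvPolynomial σ K} {d : ℕ}, p.IsHomogeneous d → X i ^ (m.degree p i) ∣ p)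
    (hG : ∀ f ∈ J, f ≠ 0 → ∃ g ∈ J, ∃ e ≤ D, g.IsHomogeneous e ∧ g ≠ 0 ∧ m.degree g ≤ m.degree f)
    {h : MvPolynomial σ K} (hh : h ∈ J) (hdvd : X i ^ (D + 1) ∣ h) : ∃ q ∈ J, h = X i * q := by
  obtain ⟨b, hb⟩ : ∃ b, m.toSyn (m.degree h) = b := ⟨_, rfl⟩
  induction b using WellFoundedLT.induction generalizing h with
  | _ b IH =>
  by_cases h0 : h = 0
  · exact ⟨0, J.zero_mem, by simp [h0]⟩
  obtain ⟨g, hgJ, e, heD, hge, hg0, hgh⟩ := hG h hh h0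
  have hhi : D + 1 ≤ m.degree h i := X_pow_dvd_iff.mp hdvd _ (m.degree_mem_support h0)
  have hgi : m.degree g i ≤ D := by
    rw [← hge.totalDegree hg0] at heD
    exact ((m.degree g).le_degree i).trans ((le_totalDegree (m.degree_mem_support hg0)).trans heD)
  have hlc : IsUnit (m.leadingCoeff g) := (m.leadingCoeff_ne_zero_iff.mpr hg0).isUnit
  set c := monomial (m.degree h - m.degree g) (hlc.unit⁻¹ * m.leadingCoeff h)
  have hc_dvd : ∀ k ≤ m.degree h i - m.degree g i, X i ^ k ∣ c := fun k hk =>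
    X_pow_dvd_iff.mpr fun a ha => by
      rw [Finset.mem_singleton.mp (support_monomial_subset ha), Finsupp.tsub_apply]
      exact hk
  obtain ⟨a, ha⟩ : X i ∣ c := pow_one (X i : MvPolynomial σ K) ▸ hc_dvd 1 (by omega)
  have hcg_dvd : X i ^ (D + 1) ∣ c * g :=
    calc X i ^ (D + 1) ∣ X i ^ (m.degree h i - m.degree g i) * X i ^ (m.degree g i) := by
          rw [← pow_add]; exact pow_dvd_pow _ (by omega)
      _ ∣ c * g := mul_dvd_mul (hc_dvd _ le_rfl) (hm hge)
  have hlt : m.toSyn (m.degree (m.reduce hlc h)) < b :=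
    hb ▸ MonomialOrder.degree_reduce_lt hlc hgh fun h0' => by simp [h0'] at hhi
  obtain ⟨q, hqJ, hq⟩ := IH _ hlt (J.sub_mem hh (J.mul_mem_left c hgJ)) (dvd_sub hdvd hcg_dvd) rfl
  refine ⟨q + a * g, J.add_mem hqJ (J.mul_mem_left a hgJ), ?_⟩
  change h - c * g = X i * q at hq
  linear_combination hq + g * ha

theorem mul_X_pow_mem_of_mul_X_pow_succ_mem
    (hm : ∀ {p : MvPolynomial σ K} {d : ℕ}, p.IsHomogeneous d → X i ^ (m.degree p i) ∣ p)
    (hG : ∀ f ∈ J, f ≠ 0 → ∃ g ∈ J, ∃ e ≤ D, g.IsHomogeneous e ∧ g ≠ 0 ∧ m.degree g ≤ m.degree f)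
    {r : MvPolynomial σ K} (hr : r * X i ^ (D + 1) ∈ J) : r * X i ^ D ∈ J := by
  obtain ⟨q, hqJ, hq⟩ := exists_eq_X_mul_of_X_pow_dvd hm hG hr (dvd_mul_left _ _)
  convert hqJ
  apply mul_left_cancel₀ (X_ne_zero i)
  rw [← hq]
  ring

end GroebnerReduction

end MvPolynomial

theorem IsGroebnerBasis.exists_isHomogeneous {m : MonomialOrder (Fin n)}
    {I : Ideal (MvPolynomial (Fin n) K)} {G : Finset (MvPolynomial (Fin n) K)}
    (hG : IsGroebnerBasis m I G) (hI : ∀ f ∈ I, ∀ d : ℕ, homogeneousComponent d f ∈ I)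
    {f : MvPolynomial (Fin n) K} (hf : f ∈ I) (hf0 : f ≠ 0) :
    ∃ g ∈ I, ∃ e ≤ G.sup totalDegree, g.IsHomogeneous e ∧ g ≠ 0 ∧ m.degree g ≤ m.degree f := by
  -- `leadExp m` unfolds to `m.degree`
  obtain ⟨g, hgG, hg0, hgf⟩ := hG.2.2 f hf hf0
  have hcoeff : coeff (m.degree g) (homogeneousComponent (m.degree g).degree g) ≠ 0 := by
    rw [coeff_homogeneousComponent, if_pos rfl]
    exact m.coeff_degree_ne_zero_iff.mpr hg0
  refine ⟨_, hI g (hG.1 hgG) _, _, ?_, homogeneousComponent_isHomogeneous _ g,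
    fun h => hcoeff (by rw [h, coeff_zero]), ?_⟩
  · exact (le_totalDegree (m.degree_mem_support hg0)).trans (Finset.le_sup hgG)
  · rwa [m.degree_homogeneousComponent_degree]

namespace Ideal

variable {R : Type*} [CommSemiring R] {J : Ideal R} {D : ℕ}

theorem mul_pow_mem_of_mul_pow_add_mem {x : R} (hx : ∀ r, r * x ^ (D + 1) ∈ J → r * x ^ D ∈ J)
    (k : ℕ) {r : R} (hr : r * x ^ (D + k) ∈ J) : r * x ^ D ∈ J := by
  induction k generalizing r with
  | zero => exact hr
  | succ k ih =>
    have hstep := hx (r * x ^ k) (by convert hr using 1; ring)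
    exact ih (by convert hstep using 1; ring)

theorem colon_span_pow_eq_iSup {x : R} (hx : ∀ r, r * x ^ (D + 1) ∈ J → r * x ^ D ∈ J) :
    Submodule.colon J (span {x ^ D} : Ideal R) =
      ⨆ k : ℕ, Submodule.colon J (span {x ^ k} : Ideal R) := by
  refine le_antisymm (le_iSup (fun k : ℕ => Submodule.colon J (span {x ^ k} : Ideal R)) D)
    (iSup_le fun k r hr => ?_)
  rw [Submodule.mem_colon_span_singleton, smul_eq_mul] at hr ⊢
  exact mul_pow_mem_of_mul_pow_add_mem hx k
    (by rw [pow_add, mul_left_comm]; exact J.mul_mem_left _ hr)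

theorem mul_prod_pow_mem_of_mul_prod_pow_succ_mem {ι : Type*} (s : Finset ι) {x : ι → R}
    (hx : ∀ j ∈ s, ∀ r, r * x j ^ (D + 1) ∈ J → r * x j ^ D ∈ J) (r : R)
    (hr : r * (∏ j ∈ s, x j) ^ (D + 1) ∈ J) : r * (∏ j ∈ s, x j) ^ D ∈ J := by
  classical
  induction s using Finset.induction_on generalizing r with
  | empty => simpa using hr
  | insert a s ha ih =>
    rw [Finset.forall_mem_insert] at hx
    rw [Finset.prod_insert ha] at hr ⊢
    have h1 := hx.1 (r * (∏ j ∈ s, x j) ^ (D + 1)) (by convert hr using 1; ring)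
    have h2 := ih hx.2 (r * x a ^ D) (by convert h1 using 1; ring)
    convert h2 using 1
    ring

end Ideal

/-- If `H` is a universal Gröbner basis of a homogeneous ideal `J`, then the
saturation exponent of `J` with respect to `x₁⋯xₙ` is at most `deg H`: already
the ideal quotient `J : (x₁⋯xₙ)^(deg H)` equals the full saturation
`⋃ₖ J : (x₁⋯xₙ)^k`. -/
theorem saturation_exponent_le_deg_universal_groebner_basis
    (J : Ideal (MvPolynomial (Fin n) K))
    (hJhom : ∀ f ∈ J, ∀ d : ℕ, homogeneousComponent d f ∈ J)
    (H : Finset (MvPolynomial (Fin n) K))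
    (hH : ∀ m : MonomialOrder (Fin n), IsGroebnerBasis m J H)
    (D : ℕ) (hD : D = H.sup totalDegree) :
    Submodule.colon J (Ideal.span {(∏ i, X i) ^ D} : Ideal (MvPolynomial (Fin n) K)) =
      ⨆ k : ℕ, Submodule.colon J (Ideal.span {(∏ i, X i) ^ k} : Ideal (MvPolynomial (Fin n) K)) := by
  subst hD
  refine Ideal.colon_span_pow_eq_iSup
    (Ideal.mul_prod_pow_mem_of_mul_prod_pow_succ_mem _ fun i _ r hr => ?_)
  exact mul_X_pow_mem_of_mul_X_pow_succ_mem (X_pow_degree_byWeight_dvd MonomialOrder.lex i)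
    (fun f hf hf0 => (hH _).exists_isHomogeneous hJhom hf hf0) hr
end

section
/- For any homogeneous ideal I in K[x_1,...,x_n], the union over all term orders of the reduced Gröbner bases of I is a universal Gröbner basis of I (it is a Gröbner basis with respect to every term order), and it is finite. -/
/-!
The reduced Gröbner basis of `I` for an order `m` is determined by the initial ideal `in_m(I)`:
two reduced bases with the same initial ideal differ by an element of `I` none of whose monomials
lies in that initial ideal, and such an element is zero. So it suffices that `I` has only finitely
many initial ideals. Suppose a monomial ideal `J` lies in infinitely many of them, and pick `m` with
`J ⊊ in_m(I)` and `g` in the reduced basis for `m` whose leading monomial is outside `J`. No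
monomial of `g` lies in `J` (the non-leading ones are outside `in_m(I)`), while every initial ideal
contains some monomial of `g`, namely its leading one for that order. By pigeonhole one monomial of
`g` lies in infinitely many initial ideals, and adding it to `J` gives a larger monomial ideal with
the same property. Dickson's lemma forbids an infinite strictly increasing chain of monomial ideals.
-/

open MvPolynomial

variable {n : ℕ} {K : Type*} [Field K]

/-- `G` is the reduced Gröbner basis of `I` with respect to `m`: a Gröbner
basis of monic polynomials such that no monomial occurring in an element of `G`
is divisible by the leading monomial of another element of `G`. -/
def IsReducedGroebnerBasis (m : MonomialOrder (Fin n))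
    (I : Ideal (MvPolynomial (Fin n) K)) (G : Finset (MvPolynomial (Fin n) K)) : Prop :=
  IsGroebnerBasis m I G ∧
    (∀ g ∈ G, coeff (leadExp m g) g = 1) ∧
    ∀ g ∈ G, ∀ g' ∈ G, g ≠ g' → ∀ e ∈ g.support, ¬ leadExp m g' ≤ e

universe u v w

namespace MonomialOrder

variable {σ : Type u}

/-- The order `m`, with its synonym type moved to another universe: the reduced bases are given
for the orders of one universe, while a universal basis must serve the orders of every universe. -/
noncomputable def ulift (m : MonomialOrder.{u, v} σ) : MonomialOrder.{u, max u w} σ :=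
  letI f : ULift.{w} (σ →₀ ℕ) → m.syn := m.toSyn ∘ ULift.down
  letI lo : LinearOrder (ULift.{w} (σ →₀ ℕ)) :=
    LinearOrder.lift' f (m.toSyn.injective.comp ULift.down_injective)
  { syn := ULift.{w} (σ →₀ ℕ)
    linearOrderSyn := lo
    isOrderedAddMonoid_syn := @Function.Injective.isOrderedAddMonoid _ _ _ _ _ _ lo.toPreorder f
      (fun _ _ => map_add m.toSyn _ _) Iff.rfl
    toSyn := AddEquiv.ulift.symm
    toSyn_monotone := fun _ _ h => m.toSyn_monotone h
    wellFoundedLT_syn := ⟨InvImage.wf f m.wellFoundedLT_syn.wf⟩ }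

theorem degree_ulift {R : Type*} [CommSemiring R] (m : MonomialOrder.{u, v} σ)
    (p : MvPolynomial σ R) : (ulift.{u, v, w} m).degree p = m.degree p := by
  rcases eq_or_ne p 0 with rfl | hp
  · simp only [degree_zero]
  exact m.toSyn.injective <| le_antisymm (m.le_degree ((ulift m).degree_mem_support hp))
    ((ulift m).le_degree (m.degree_mem_support hp))

end MonomialOrder

namespace AddSemigroupIdeal

variable {M : Type*} [AddCommMonoid M] [PartialOrder M] [CanonicallyOrderedAdd M]

theorem mem_of_le (J : AddSemigroupIdeal M) {x y : M} (hxy : x ≤ y) (hx : x ∈ J) : y ∈ J := by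
  obtain ⟨c, rfl⟩ := exists_add_of_le hxy
  rw [add_comm]
  exact J.add_mem c hx

theorem finite_range_of_exists_transversal [WellQuasiOrderedLE M] {ι : Type*}
    (L : ι → AddSemigroupIdeal M)
    (h : ∀ i, ∀ x ∈ L i, ∃ F : Finset M, (∀ j, ∃ z ∈ F, z ∈ L j) ∧ ∀ z ∈ F, z ∈ L i → z ≤ x) :
    (Set.range L).Finite := by
  suffices key : ∀ J : AddSemigroupIdeal M, ∀ S : Set ι, (∀ i ∈ S, J ≤ L i) → (L '' S).Finite by
    simpa only [Set.image_univ] using key ⊥ Set.univ fun _ _ => bot_le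
  intro J
  induction J using WellFoundedGT.induction with | _ J ih => ?_
  intro S hJS
  by_contra hinf
  obtain ⟨i, hiS, hJi⟩ : ∃ i ∈ S, J < L i := by
    by_contra! hall
    refine hinf ((Set.finite_singleton J).subset ?_)
    rintro _ ⟨i, hi, rfl⟩
    exact ((hJS i hi).lt_or_eq.resolve_left (hall i hi)).symm
  obtain ⟨x, hxi, hxJ⟩ := SetLike.exists_of_lt hJi
  obtain ⟨F, hFmeets, hFbelow⟩ := h i x hxi
  obtain ⟨z, hzF, hz⟩ : ∃ z ∈ F, (L '' {j ∈ S | z ∈ L j}).Infinite := by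
    by_contra! hall
    refine hinf ((F.finite_toSet.biUnion hall).subset ?_)
    rintro _ ⟨j, hj, rfl⟩
    obtain ⟨z, hzF, hzj⟩ := hFmeets j
    exact Set.mem_biUnion hzF ⟨j, ⟨hj, hzj⟩, rfl⟩
  -- otherwise `z ∈ L i`, hence `z ≤ x` and `x ∈ J`
  have hzJ : z ∉ J := fun hzJ => hxJ (J.mem_of_le (hFbelow z hzF (hJS i hiS hzJ)) hzJ)
  refine hz (ih (J ⊔ closure {z}) (left_lt_sup.2 fun hle => hzJ (hle (mem_closure_of_mem rfl)))
    _ fun j hj => sup_le (hJS j hj.1) (closure_le.2 (Set.singleton_subset_iff.2 hj.2)))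

end AddSemigroupIdeal

section InitialExponents

variable {σ R : Type*} [CommSemiring R]

/-- The initial ideal of `I` with respect to `m`, recorded by the exponents of its monomials. -/
noncomputable def initialExponents (m : MonomialOrder σ) (I : Ideal (MvPolynomial σ R)) :
    AddSemigroupIdeal (σ →₀ ℕ) :=
  AddSemigroupIdeal.closure (m.degree '' {f | f ∈ I ∧ f ≠ 0})

theorem mem_initialExponents {m : MonomialOrder σ} {I : Ideal (MvPolynomial σ R)}
    {x : σ →₀ ℕ} : x ∈ initialExponents m I ↔ ∃ f ∈ I, f ≠ 0 ∧ m.degree f ≤ x := by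
  simp only [initialExponents, AddSemigroupIdeal.mem_closure'', Set.mem_image, Set.mem_ofPred_eq,
    le_iff_exists_add']
  grind

theorem degree_mem_initialExponents {m : MonomialOrder σ} {I : Ideal (MvPolynomial σ R)}
    {f : MvPolynomial σ R} (hf : f ∈ I) (hf0 : f ≠ 0) : m.degree f ∈ initialExponents m I :=
  mem_initialExponents.2 ⟨f, hf, hf0, le_rfl⟩

theorem eq_zero_of_forall_notMem_initialExponents {m : MonomialOrder σ}
    {I : Ideal (MvPolynomial σ R)} {f : MvPolynomial σ R} (hf : f ∈ I)
    (hsupp : ∀ z ∈ f.support, z ∉ initialExponents m I) : f = 0 := by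
  by_contra hf0
  exact hsupp _ (m.degree_mem_support hf0) (degree_mem_initialExponents hf hf0)

end InitialExponents

section GroebnerBasis

variable {m m' : MonomialOrder (Fin n)} {I : Ideal (MvPolynomial (Fin n) K)}
  {A B : Finset (MvPolynomial (Fin n) K)}

theorem IsGroebnerBasis.exists_leadExp_le (hA : IsGroebnerBasis m I A) {x : Fin n →₀ ℕ}
    (hx : x ∈ initialExponents m I) : ∃ g ∈ A, g ≠ 0 ∧ leadExp m g ≤ x := by
  obtain ⟨f, hf, hf0, hfx⟩ := mem_initialExponents.1 hx
  obtain ⟨g, hg, hg0, hgf⟩ := hA.2.2 f hf hf0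
  exact ⟨g, hg, hg0, hgf.trans hfx⟩

theorem IsGroebnerBasis.mono (hA : IsGroebnerBasis m I A) (hAB : A ⊆ B)
    (hB : (B : Set (MvPolynomial (Fin n) K)) ⊆ I) : IsGroebnerBasis m I B := by
  refine ⟨hB, le_antisymm (Ideal.span_le.2 hB) (hA.2.1 ▸ Ideal.span_mono hAB), ?_⟩
  intro f hf hf0
  obtain ⟨g, hg, hg0, hgf⟩ := hA.2.2 f hf hf0
  exact ⟨g, hAB hg, hg0, hgf⟩

theorem leadExp_ulift (p : MvPolynomial (Fin n) K) :
    leadExp (MonomialOrder.ulift.{0, v, w} m) p = leadExp m p :=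
  m.degree_ulift p

theorem isGroebnerBasis_ulift_iff :
    IsGroebnerBasis (MonomialOrder.ulift.{0, v, w} m) I A ↔ IsGroebnerBasis m I A := by
  simp only [IsGroebnerBasis, leadExp_ulift]

theorem IsReducedGroebnerBasis.ne_zero (hA : IsReducedGroebnerBasis m I A)
    {g : MvPolynomial (Fin n) K} (hg : g ∈ A) : g ≠ 0 := by
  rintro rfl
  simpa using hA.2.1 0 hg

theorem IsReducedGroebnerBasis.eq_leadExp_of_mem_support (hA : IsReducedGroebnerBasis m I A)
    {g : MvPolynomial (Fin n) K} (hg : g ∈ A) {z : Fin n →₀ ℕ} (hz : z ∈ g.support)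
    (hzI : z ∈ initialExponents m I) : z = leadExp m g := by
  obtain ⟨g', hg', -, hg'z⟩ := hA.1.exists_leadExp_le hzI
  obtain rfl : g' = g := by
    by_contra hne
    exact hA.2.2 g hg g' hg' (Ne.symm hne) z hz hg'z
  exact m.toSyn.injective (le_antisymm (m.le_degree hz) (m.toSyn_monotone hg'z))

theorem IsReducedGroebnerBasis.subset_of_initialExponents_eq
    (hA : IsReducedGroebnerBasis m I A) (hB : IsReducedGroebnerBasis m' I B)
    (h : initialExponents m I = initialExponents m' I) : A ⊆ B := by
  intro g hg
  have hgI : g ∈ I := hA.1.1 hg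
  have hg0 : g ≠ 0 := hA.ne_zero hg
  set d := leadExp m g
  have hd : d ∈ initialExponents m I := degree_mem_initialExponents hgI hg0
  obtain ⟨g', hg', hg'0, hg'd⟩ := hB.1.exists_leadExp_le (h ▸ hd)
  have hd' : leadExp m' g' = d := by
    have : leadExp m' g' ∈ initialExponents m I := h ▸ degree_mem_initialExponents (hB.1.1 hg') hg'0
    obtain ⟨a, ha, -, had'⟩ := hA.1.exists_leadExp_le this
    obtain rfl : a = g := by
      by_contra hne
      exact hA.2.2 g hg a ha (Ne.symm hne) d (m.degree_mem_support hg0) (had'.trans hg'd)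
    exact le_antisymm hg'd had'
  suffices g - g' = 0 by rwa [sub_eq_zero.1 this]
  refine eq_zero_of_forall_notMem_initialExponents (m := m) (sub_mem hgI (hB.1.1 hg')) ?_
  intro z hz hzI
  have hzd : z = d := by
    rcases Finset.mem_union.1 (support_sub (Fin n) g g' hz) with hzg | hzg'
    · exact hA.eq_leadExp_of_mem_support hg hzg hzI
    · exact hd' ▸ hB.eq_leadExp_of_mem_support hg' hzg' (h ▸ hzI)
  have hcoeff : coeff d (g - g') = 0 := by
    rw [coeff_sub, hA.2.1 g hg, ← hd', hB.2.1 g' hg', sub_self]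
  exact mem_support_iff.1 hz (hzd ▸ hcoeff)

theorem IsReducedGroebnerBasis.eq_of_initialExponents_eq
    (hA : IsReducedGroebnerBasis m I A) (hB : IsReducedGroebnerBasis m' I B)
    (h : initialExponents m I = initialExponents m' I) : A = B :=
  (hA.subset_of_initialExponents_eq hB h).antisymm (hB.subset_of_initialExponents_eq hA h.symm)

theorem finite_range_initialExponents
    (hI : ∀ m : MonomialOrder.{0, v} (Fin n), ∃ A, IsReducedGroebnerBasis m I A) :
    (Set.range fun m : MonomialOrder.{0, v} (Fin n) => initialExponents m I).Finite := by
  refine AddSemigroupIdeal.finite_range_of_exists_transversal _ fun m₀ x hx => ?_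
  obtain ⟨A, hA⟩ := hI m₀
  obtain ⟨g, hg, hg0, hgx⟩ := hA.1.exists_leadExp_le hx
  refine ⟨g.support, fun m => ⟨_, m.degree_mem_support hg0, ?_⟩, fun z hz hzI => ?_⟩
  · exact degree_mem_initialExponents (hA.1.1 hg) hg0
  · exact hA.eq_leadExp_of_mem_support hg hz hzI ▸ hgx

theorem finite_range_of_isReducedGroebnerBasis
    {G : MonomialOrder (Fin n) → Finset (MvPolynomial (Fin n) K)}
    (hG : ∀ m, IsReducedGroebnerBasis m I (G m)) : (Set.range G).Finite := by
  set L := fun m : MonomialOrder (Fin n) => initialExponents m I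
  have := (finite_range_initialExponents fun m => ⟨G m, hG m⟩).to_subtype
  refine (Set.finite_range fun J : Set.range L => G J.2.choose).subset ?_
  rintro _ ⟨m, rfl⟩
  exact ⟨⟨L m, m, rfl⟩, (hG _).eq_of_initialExponents_eq (hG m)
    (Exists.choose_spec (⟨m, rfl⟩ : ∃ m', L m' = L m))⟩

end GroebnerBasis

theorem union_reduced_groebner_bases_universal_general
    (I : Ideal (MvPolynomial (Fin n) K))
    (G : MonomialOrder (Fin n) → Finset (MvPolynomial (Fin n) K))
    (hG : ∀ m, IsReducedGroebnerBasis m I (G m)) :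
    ∃ U : Finset (MvPolynomial (Fin n) K),
      (↑U : Set (MvPolynomial (Fin n) K)) = ⋃ m : MonomialOrder (Fin n), ↑(G m) ∧
      ∀ m : MonomialOrder (Fin n), IsGroebnerBasis m I U := by
  have hfin : (⋃ m, (G m : Set (MvPolynomial (Fin n) K))).Finite := by
    simpa only [Set.biUnion_range] using
      (finite_range_of_isReducedGroebnerBasis hG).biUnion fun A _ => A.finite_toSet
  refine ⟨hfin.toFinset, hfin.coe_toFinset, fun m => ?_⟩
  have hsub : ∀ m', G m' ⊆ hfin.toFinset := fun m' g hg =>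
    hfin.mem_toFinset.2 (Set.mem_iUnion_of_mem m' hg)
  have hUI : (hfin.toFinset : Set (MvPolynomial (Fin n) K)) ⊆ I := by
    rw [hfin.coe_toFinset]
    exact Set.iUnion_subset fun m' => (hG m').1.1
  exact isGroebnerBasis_ulift_iff.1 ((hG m.ulift).1.mono (hsub _) hUI)

/-- The union over all monomial orders of the reduced Gröbner bases of a
homogeneous ideal `I` is finite and is a Gröbner basis of `I` with respect to
every monomial order, i.e. a universal Gröbner basis. -/
theorem union_reduced_groebner_bases_universal
    (I : Ideal (MvPolynomial (Fin n) K))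
    (hIhom : ∀ f ∈ I, ∀ d : ℕ, homogeneousComponent d f ∈ I)
    (G : MonomialOrder (Fin n) → Finset (MvPolynomial (Fin n) K))
    (hG : ∀ m, IsReducedGroebnerBasis m I (G m)) :
    ∃ U : Finset (MvPolynomial (Fin n) K),
      (↑U : Set (MvPolynomial (Fin n) K)) = ⋃ m : MonomialOrder (Fin n), ↑(G m) ∧
      ∀ m : MonomialOrder (Fin n), IsGroebnerBasis m I U :=
  union_reduced_groebner_bases_universal_general I G hG
end

section
/- For d ≥ 1 and n ≥ 3, the maximal number of vertices λ_0(d,n) of a lattice polytope contained in the dilated simplex d·Δ_{n−1} satisfies λ_0(d,n) ≤ λ_0(d−1,n) + λ_0(d,n−1) (for d ≥ 2), λ_0(1,n) = n, and λ_0(d,2) = 2. -/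
/-!
Split the lattice points spanning a polytope `P ⊆ d·Δ_{n-1}` according to whether their last
coordinate vanishes. Every vertex of `P` is a vertex of the hull of its own part, so the vertex
count is subadditive. The points with last coordinate `0` live, after dropping that coordinate,
in `d·Δ_{n-2}`; the others, after subtracting `e_n`, in `(d-1)·Δ_{n-1}`; both operations are
affine and injective on the hulls, so they preserve vertex counts.
For `d = 1` the only lattice points are the `n` unit vectors, and for `n = 2` every polytope is
a segment. The matching lower bounds come from the simplex spanned by the points `d·e_i`, whose
vertices are corners of the cube `[0, d]ⁿ`.
-/

/-- `lam0 d n` is the maximal number of vertices (extreme points) of a lattice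
polytope contained in the dilated standard simplex `d·Δ_{n-1} ⊂ ℝ^n`. -/
noncomputable def lam0 (d n : ℕ) : ℕ :=
  sSup {k | ∃ V : Finset (Fin n → ℕ), V.Nonempty ∧ (∀ v ∈ V, ∑ i, v i = d) ∧
    k = (Set.extremePoints ℝ
      (convexHull ℝ ((fun v : Fin n → ℕ => fun i => (v i : ℝ)) '' (V : Set (Fin n → ℕ))))).ncard}

open Set

section Convex

variable {𝕜 E F : Type*} [Field 𝕜] [LinearOrder 𝕜] [IsStrictOrderedRing 𝕜]
  [AddCommGroup E] [Module 𝕜 E] [AddCommGroup F] [Module 𝕜 F]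

theorem Convex.extremePoints_image_of_injOn {A : Set E} (hA : Convex 𝕜 A) (φ : E →ᵃ[𝕜] F)
    (hφ : InjOn φ A) : (φ '' A).extremePoints 𝕜 = φ '' A.extremePoints 𝕜 := by
  ext y
  constructor
  · rintro ⟨⟨x, hx, rfl⟩, hext⟩
    refine ⟨x, ⟨hx, fun x₁ hx₁ x₂ hx₂ hseg => hφ hx₁ hx ?_⟩, rfl⟩
    refine hext (mem_image_of_mem φ hx₁) (mem_image_of_mem φ hx₂) ?_
    rw [← image_openSegment]
    exact mem_image_of_mem φ hseg
  · rintro ⟨x, ⟨hx, hext⟩, rfl⟩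
    refine ⟨mem_image_of_mem φ hx, ?_⟩
    rintro _ ⟨x₁, hx₁, rfl⟩ _ ⟨x₂, hx₂, rfl⟩ hseg
    rw [← image_openSegment] at hseg
    obtain ⟨z, hz, hzx⟩ := hseg
    rw [← hφ (hA.openSegment_subset hx₁ hx₂ hz) hx hzx] at hext
    rw [hext hx₁ hx₂ hz, hzx]

theorem ncard_extremePoints_convexHull_image_of_injOn {s : Set E} (φ : E →ᵃ[𝕜] F)
    (hφ : InjOn φ (convexHull 𝕜 s)) :
    ((convexHull 𝕜 (φ '' s)).extremePoints 𝕜).ncard = ((convexHull 𝕜 s).extremePoints 𝕜).ncard := by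
  rw [← φ.image_convexHull, (convex_convexHull 𝕜 s).extremePoints_image_of_injOn φ hφ,
    (hφ.mono extremePoints_subset).ncard_image]

theorem ncard_extremePoints_convexHull_union_le {s t : Set E} (hs : s.Finite) (ht : t.Finite) :
    ((convexHull 𝕜 (s ∪ t)).extremePoints 𝕜).ncard ≤
      ((convexHull 𝕜 s).extremePoints 𝕜).ncard + ((convexHull 𝕜 t).extremePoints 𝕜).ncard := by
  have restrict : ∀ u ⊆ s ∪ t,
      (convexHull 𝕜 (s ∪ t)).extremePoints 𝕜 ∩ u ⊆ (convexHull 𝕜 u).extremePoints 𝕜 :=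
    fun u hu x hx => inter_extremePoints_subset_extremePoints_of_subset (convexHull_mono hu)
      ⟨subset_convexHull 𝕜 u hx.2, hx.1⟩
  have hsub : (convexHull 𝕜 (s ∪ t)).extremePoints 𝕜 ⊆
      (convexHull 𝕜 s).extremePoints 𝕜 ∪ (convexHull 𝕜 t).extremePoints 𝕜 := by
    intro x hx
    rcases extremePoints_convexHull_subset hx with hxs | hxt
    · exact Or.inl (restrict s subset_union_left ⟨hx, hxs⟩)
    · exact Or.inr (restrict t subset_union_right ⟨hx, hxt⟩)
  have hfin : ((convexHull 𝕜 s).extremePoints 𝕜 ∪ (convexHull 𝕜 t).extremePoints 𝕜).Finite :=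
    (hs.subset extremePoints_convexHull_subset).union (ht.subset extremePoints_convexHull_subset)
  exact (ncard_le_ncard hsub hfin).trans (ncard_union_le _ _)

end Convex

theorem Real.extremePoints_subset_sInf_sSup (A : Set ℝ) : A.extremePoints ℝ ⊆ {sInf A, sSup A} := by
  intro y hy
  by_cases hleast : ∀ a ∈ A, y ≤ a
  · exact Or.inl (IsLeast.csInf_eq ⟨hy.1, hleast⟩).symm
  by_cases hgreatest : ∀ b ∈ A, b ≤ y
  · exact Or.inr (IsGreatest.csSup_eq ⟨hy.1, hgreatest⟩).symm
  push Not at hleast hgreatest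
  obtain ⟨a, ha, hay⟩ := hleast
  obtain ⟨b, hb, hyb⟩ := hgreatest
  have hseg : y ∈ openSegment ℝ a b := by
    rw [openSegment_eq_Ioo (hay.trans hyb)]
    exact ⟨hay, hyb⟩
  exact absurd (hy.2 ha hb hseg) hay.ne

theorem Real.ncard_extremePoints_le_two (A : Set ℝ) : (A.extremePoints ℝ).ncard ≤ 2 :=
  (ncard_le_ncard (Real.extremePoints_subset_sInf_sSup A) (toFinite _)).trans
    ((ncard_insert_le _ _).trans (by rw [ncard_singleton]))

section Lattice

variable {ι κ : Type*}

def castReal (v : ι → ℕ) : ι → ℝ := fun i => v i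

theorem castReal_injective : Function.Injective (castReal : (ι → ℕ) → ι → ℝ) :=
  Nat.cast_injective.comp_left

-- `lam0 d n` is, definitionally, the supremum of `vertexCount V` over nonempty `V` of level `d`.
noncomputable def vertexCount (V : Finset (ι → ℕ)) : ℕ :=
  ((convexHull ℝ (castReal '' (V : Set (ι → ℕ)))).extremePoints ℝ).ncard

theorem vertexCount_le_card (V : Finset (ι → ℕ)) : vertexCount V ≤ V.card :=
  calc vertexCount V ≤ (castReal '' (V : Set (ι → ℕ))).ncard :=
        ncard_le_ncard extremePoints_convexHull_subset (V.finite_toSet.image _)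
    _ ≤ V.card := by
        rw [castReal_injective.injOn.ncard_image, ncard_coe_finset]

theorem vertexCount_union_le [DecidableEq (ι → ℕ)] (V W : Finset (ι → ℕ)) :
    vertexCount (V ∪ W) ≤ vertexCount V + vertexCount W := by
  unfold vertexCount
  rw [Finset.coe_union, image_union]
  exact ncard_extremePoints_convexHull_union_le (V.finite_toSet.image _) (W.finite_toSet.image _)

theorem vertexCount_image [DecidableEq (κ → ℕ)] (V : Finset (ι → ℕ)) {f : (ι → ℕ) → κ → ℕ}
    (φ : (ι → ℝ) →ᵃ[ℝ] κ → ℝ) (hφ : InjOn φ (convexHull ℝ (castReal '' (V : Set (ι → ℕ)))))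
    (hf : ∀ v ∈ V, castReal (f v) = φ (castReal v)) :
    vertexCount (V.image f) = vertexCount V := by
  have himage : castReal '' ((V.image f : Finset (κ → ℕ)) : Set (κ → ℕ)) =
      φ '' (castReal '' (V : Set (ι → ℕ))) := by
    rw [Finset.coe_image, image_image, image_image]
    exact image_congr hf
  rw [vertexCount, himage, ncard_extremePoints_convexHull_image_of_injOn φ hφ, vertexCount]

theorem vertexCount_eq_card_of_forall_eq_zero_or_eq {V : Finset (ι → ℕ)} {a : ℕ}
    (hV : ∀ v ∈ V, ∀ i, v i = 0 ∨ v i = a) : vertexCount V = V.card := by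
  let cube : Set (ι → ℝ) := univ.pi fun _ => Icc 0 (a : ℝ)
  have hcorners : castReal '' (V : Set (ι → ℕ)) ⊆ cube.extremePoints ℝ := by
    rintro _ ⟨v, hv, rfl⟩
    rw [extremePoints_pi]
    intro i _
    rw [extremePoints_Icc (Nat.cast_nonneg a)]
    rcases hV v hv i with h | h <;> simp [castReal, h]
  have hhull : convexHull ℝ (castReal '' (V : Set (ι → ℕ))) ⊆ cube :=
    convexHull_min (hcorners.trans extremePoints_subset) (convex_pi fun _ _ => convex_Icc 0 _)
  have hext : (convexHull ℝ (castReal '' (V : Set (ι → ℕ)))).extremePoints ℝ =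
      castReal '' (V : Set (ι → ℕ)) :=
    extremePoints_convexHull_subset.antisymm fun x hx =>
      inter_extremePoints_subset_extremePoints_of_subset hhull
        ⟨subset_convexHull ℝ _ hx, hcorners hx⟩
  rw [vertexCount, hext, castReal_injective.injOn.ncard_image, ncard_coe_finset]

theorem Pi.single_left_injective {α : Type*} [DecidableEq ι] [Zero α] {a : α}
    (ha : a ≠ 0) : Function.Injective fun i : ι => (Pi.single i a : ι → α) := by
  intro i j hij
  by_contra hne
  simpa [Pi.single_apply, hne, ha] using congrFun hij i

theorem vertexCount_image_single [Fintype ι] [DecidableEq ι] {a : ℕ} (ha : a ≠ 0) :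
    vertexCount (Finset.univ.image fun i : ι => Pi.single i a) = Fintype.card ι := by
  rw [vertexCount_eq_card_of_forall_eq_zero_or_eq (a := a),
    Finset.card_image_of_injective _ (Pi.single_left_injective ha), Finset.card_univ]
  simp only [Finset.mem_image, Finset.mem_univ, true_and, forall_exists_index,
    forall_apply_eq_imp_iff]
  intro i j
  rw [Pi.single_apply]
  split_ifs <;> simp

theorem Pi.exists_eq_single_of_sum_eq_one [Fintype ι] [DecidableEq ι] {v : ι → ℕ}
    (h : ∑ i, v i = 1) : ∃ i, v = Pi.single i 1 := by
  obtain ⟨i, hi⟩ := (Finsupp.sum_eq_one_iff (Finsupp.equivFunOnFinite.symm v)).1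
    (by rwa [Finsupp.sum_fintype _ _ fun _ => rfl])
  exact ⟨i, by simpa [Finsupp.single_eq_pi_single] using congrArg Finsupp.equivFunOnFinite hi⟩

end Lattice

section Lam0

variable {d n : ℕ}

theorem vertexCount_le_lam0 {V : Finset (Fin n → ℕ)} (hV : ∀ v ∈ V, ∑ i, v i = d) :
    vertexCount V ≤ lam0 d n := by
  rcases V.eq_empty_or_nonempty with rfl | hne
  · simp [vertexCount]
  refine le_csSup ⟨(Finset.Nat.antidiagonalTuple n d).card, ?_⟩ ⟨V, hne, hV, rfl⟩
  rintro _ ⟨W, -, hW, rfl⟩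
  exact (vertexCount_le_card W).trans
    (Finset.card_le_card fun w hw => Finset.Nat.mem_antidiagonalTuple.2 (hW w hw))

theorem lam0_le {k : ℕ}
    (h : ∀ V : Finset (Fin n → ℕ), (∀ v ∈ V, ∑ i, v i = d) → vertexCount V ≤ k) :
    lam0 d n ≤ k :=
  csSup_le' (by rintro _ ⟨V, -, hV, rfl⟩; exact h V hV)

theorem vertexCount_le_lam0_of_last_eq_zero {V : Finset (Fin (n + 1) → ℕ)}
    (hV : ∀ v ∈ V, ∑ i, v i = d) (hlast : ∀ v ∈ V, v (Fin.last n) = 0) :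
    vertexCount V ≤ lam0 d n := by
  have hplane : convexHull ℝ (castReal '' (V : Set (Fin (n + 1) → ℕ))) ⊆
      {x | x (Fin.last n) = 0} := by
    refine convexHull_min ?_ (convex_hyperplane (LinearMap.proj (Fin.last n)).isLinear 0)
    rintro _ ⟨v, hv, rfl⟩
    simp [castReal, hlast v hv]
  have hinj : InjOn (LinearMap.funLeft ℝ ℝ Fin.castSucc).toAffineMap
      (convexHull ℝ (castReal '' (V : Set (Fin (n + 1) → ℕ)))) := by
    intro x hx y hy hxy
    funext i
    refine Fin.lastCases ?_ (fun j => congrFun hxy j) i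
    rw [hplane hx, hplane hy]
  rw [← vertexCount_image V _ hinj (f := Fin.init) fun v _ => rfl]
  refine vertexCount_le_lam0 ?_
  simp only [Finset.mem_image, forall_exists_index, and_imp, forall_apply_eq_imp_iff₂]
  intro v hv
  simpa [Fin.init, Fin.sum_univ_castSucc, hlast v hv] using hV v hv

theorem vertexCount_le_lam0_pred_of_last_ne_zero {V : Finset (Fin (n + 1) → ℕ)}
    (hV : ∀ v ∈ V, ∑ i, v i = d) (hlast : ∀ v ∈ V, v (Fin.last n) ≠ 0) :
    vertexCount V ≤ lam0 (d - 1) (n + 1) := by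
  let e : Fin (n + 1) → ℕ := Pi.single (Fin.last n) 1
  have hle : ∀ v ∈ V, ∀ i, e i ≤ v i := by
    intro v hv i
    simp only [e, Pi.single_apply]
    split_ifs with h
    · exact Nat.one_le_iff_ne_zero.2 (h ▸ hlast v hv)
    · exact Nat.zero_le _
  let shift := (AffineEquiv.constVAdd ℝ (Fin (n + 1) → ℝ) (-castReal e)).toAffineMap
  have hshift : ∀ v ∈ V, castReal (v - e) = shift (castReal v) := by
    intro v hv
    funext i
    simp [shift, castReal, Nat.cast_sub (hle v hv i), neg_add_eq_sub]
  rw [← vertexCount_image V shift (AffineEquiv.injective _).injOn hshift]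
  refine vertexCount_le_lam0 ?_
  simp only [Finset.mem_image, forall_exists_index, and_imp, forall_apply_eq_imp_iff₂]
  intro v hv
  rw [Pi.sub_def, Finset.sum_tsub_distrib _ fun i _ => hle v hv i, hV v hv,
    Finset.sum_pi_single']
  simp

theorem lam0_succ_le (d n : ℕ) : lam0 d (n + 1) ≤ lam0 (d - 1) (n + 1) + lam0 d n := by
  refine lam0_le fun V hV => ?_
  rw [← V.filter_union_filter_not_eq (fun v => v (Fin.last n) = 0)]
  calc _ ≤ _ := vertexCount_union_le _ _
    _ ≤ lam0 d n + lam0 (d - 1) (n + 1) := by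
      refine add_le_add ?_ ?_
      · exact vertexCount_le_lam0_of_last_eq_zero (fun v hv => hV v (Finset.mem_of_mem_filter v hv))
          fun v hv => (Finset.mem_filter.1 hv).2
      · exact vertexCount_le_lam0_pred_of_last_ne_zero
          (fun v hv => hV v (Finset.mem_of_mem_filter v hv)) fun v hv => (Finset.mem_filter.1 hv).2
    _ = _ := add_comm _ _

theorem le_lam0 (hd : d ≠ 0) : n ≤ lam0 d n := by
  classical
  calc n = vertexCount (Finset.univ.image fun i : Fin n => Pi.single i d) := by
        rw [vertexCount_image_single hd, Fintype.card_fin]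
    _ ≤ lam0 d n := vertexCount_le_lam0 (by simp [Finset.sum_pi_single'])

theorem lam0_one (n : ℕ) : lam0 1 n = n := by
  classical
  refine le_antisymm (lam0_le fun V hV => ?_) (le_lam0 one_ne_zero)
  calc vertexCount V ≤ V.card := vertexCount_le_card V
    _ ≤ (Finset.univ.image fun i : Fin n => Pi.single i 1).card := by
        refine Finset.card_le_card fun v hv => ?_
        obtain ⟨i, rfl⟩ := Pi.exists_eq_single_of_sum_eq_one (hV v hv)
        simp
    _ ≤ n := Finset.card_image_le.trans_eq (by simp)

theorem vertexCount_le_two {V : Finset (Fin 2 → ℕ)} (hV : ∀ v ∈ V, ∑ i, v i = d) :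
    vertexCount V ≤ 2 := by
  have hline : convexHull ℝ (castReal '' (V : Set (Fin 2 → ℕ))) ⊆ {x | x 0 + x 1 = d} := by
    refine convexHull_min ?_ (convex_hyperplane ⟨fun x y => by simp only [Pi.add_apply]; ring,
      fun c x => by simp only [Pi.smul_apply, smul_eq_mul]; ring⟩ _)
    rintro _ ⟨v, hv, rfl⟩
    simpa [castReal, Fin.sum_univ_two] using congrArg ((↑) : ℕ → ℝ) (hV v hv)
  have hinj : InjOn (LinearMap.proj 0 : (Fin 2 → ℝ) →ₗ[ℝ] ℝ).toAffineMap
      (convexHull ℝ (castReal '' (V : Set (Fin 2 → ℕ)))) := by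
    intro x hx y hy (hxy : x 0 = y 0)
    have hx' : x 0 + x 1 = d := hline hx
    have hy' : y 0 + y 1 = d := hline hy
    have h1 : x 1 = y 1 := by linarith
    funext i
    fin_cases i
    exacts [hxy, h1]
  rw [vertexCount, ← ncard_extremePoints_convexHull_image_of_injOn _ hinj]
  exact Real.ncard_extremePoints_le_two _

theorem lam0_two (hd : d ≠ 0) : lam0 d 2 = 2 :=
  le_antisymm (lam0_le fun _ hV => vertexCount_le_two hV) (le_lam0 hd)

end Lam0

theorem lam0_recursion_general (d n : ℕ) (hd : 1 ≤ d) :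
    (2 ≤ d → lam0 d n ≤ lam0 (d - 1) n + lam0 d (n - 1)) ∧
    lam0 1 n = n ∧
    lam0 d 2 = 2 := by
  refine ⟨fun _ => ?_, lam0_one n, lam0_two (Nat.one_le_iff_ne_zero.1 hd)⟩
  cases n with
  | zero => exact le_add_self
  | succ m => exact lam0_succ_le d m

/-- Recursion and base cases for the maximal vertex numbers of lattice
polytopes in dilated simplices: `λ₀(d,n) ≤ λ₀(d-1,n) + λ₀(d,n-1)` for `d ≥ 2`,
`λ₀(1,n) = n`, and `λ₀(d,2) = 2`. -/
theorem lam0_recursion (d n : ℕ) (hd : 1 ≤ d) (hn : 3 ≤ n) :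
    (2 ≤ d → lam0 d n ≤ lam0 (d - 1) n + lam0 d (n - 1)) ∧
    lam0 1 n = n ∧
    lam0 d 2 = 2 :=
  lam0_recursion_general d n hd
end

section
/- Let n ≥ 2, s ≥ 1, d ≥ 1. Then for every 0 ≤ j ≤ n−1, Σ_{i=1}^{n−j} (−1)^{n+i−j} binomial(n−j−1, i−1) binomial(sdi+n−1, n−1) ≥ 0, i.e., the alternating sum appearing in the f-vector bound is nonnegative. -/
open Finset fwdDiff

/-!
Reindexing `i = k + 1` turns the sum into the `(n - j - 1)`-th forward difference, with step
`s * d`, of `x ↦ (x + n - 1).choose (n - 1)`, evaluated at `s * d`. By the hockey-stick identity the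
step-`a` difference of `x ↦ (x + K + 1).choose (K + 1)` is `∑ r < a, (x + r + 1 + K).choose K`, a sum
of shifts of the same kind of function with `K` lowered by one. Hence an `M`-th difference of
`x ↦ (x + K).choose K` with `M ≤ K` unfolds into a sum of binomial coefficients.
-/

lemma fwdDiff_choose_add_succ_eq_sum (a K : ℕ) :
    Δ_[a] (fun x ↦ ((x + (K + 1)).choose (K + 1) : ℤ)) =
      ∑ r ∈ range a, fun x ↦ ((x + (r + 1) + K).choose K : ℤ) := by
  funext x
  have pascal (r : ℕ) : ((x + (r + 1) + K).choose K : ℤ) =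
      ((x + (r + 1) + (K + 1)).choose (K + 1) : ℤ) - ((x + r + (K + 1)).choose (K + 1)) := by
    rw [show x + (r + 1) + (K + 1) = x + (r + 1) + K + 1 by ring, Nat.choose_succ_succ',
      show x + r + (K + 1) = x + (r + 1) + K by ring]
    push_cast
    ring
  rw [Finset.sum_apply]
  simp only [pascal, sum_range_sub (fun r ↦ ((x + r + (K + 1)).choose (K + 1) : ℤ))]
  simp [fwdDiff]

theorem fwdDiff_iter_choose_add_nonneg (a : ℕ) {M K : ℕ} (h : M ≤ K) (y : ℕ) :
    0 ≤ Δ_[a] ^[M] (fun x ↦ ((x + K).choose K : ℤ)) y := by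
  induction M generalizing K y with
  | zero => exact Int.natCast_nonneg _
  | succ M ih =>
    obtain ⟨K, rfl⟩ : ∃ K', K = K' + 1 := ⟨K - 1, by omega⟩
    rw [Function.iterate_succ_apply, fwdDiff_choose_add_succ_eq_sum, fwdDiff_iter_finsetSum,
      Finset.sum_apply]
    refine sum_nonneg fun r _ ↦ ?_
    have shift := fwdDiff_iter_comp_add a (fun x ↦ ((x + K).choose K : ℤ)) (r + 1) M y
    exact shift ▸ ih (by omega) _

lemma sum_Icc_neg_one_pow_mul_choose_eq_fwdDiff_iter {a n j : ℕ} (h : j < n) :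
    ∑ i ∈ Icc 1 (n - j),
        (-1 : ℤ) ^ (n + i - j) * ((n - j - 1).choose (i - 1)) * ((a * i + n - 1).choose (n - 1)) =
      Δ_[a] ^[n - j - 1] (fun x ↦ ((x + (n - 1)).choose (n - 1) : ℤ)) a := by
  obtain ⟨M, hM⟩ : ∃ M, n - j = M + 1 := ⟨n - j - 1, by omega⟩
  rw [fwdDiff_iter_eq_sum_shift, hM, Nat.add_sub_cancel, ← Ico_add_one_right_eq_Icc,
    sum_Ico_eq_sum_range, Nat.add_sub_cancel]
  refine sum_congr rfl fun k hk ↦ ?_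
  have hkM : k ≤ M := Nat.le_of_lt_succ (mem_range.mp hk)
  have sign : n + (1 + k) - j = (M - k) + 2 * (k + 1) := by omega
  have point : a * (1 + k) + n - 1 = a + k • a + (n - 1) := by
    rw [smul_eq_mul, mul_add, mul_one, mul_comm]
    omega
  rw [sign, pow_add, pow_mul, neg_one_sq, one_pow, mul_one, Nat.add_sub_cancel_left, point,
    smul_eq_mul, smul_eq_mul, mul_assoc]

theorem f_vector_bound_nonneg_general (n s d j : ℕ) :
    0 ≤ ∑ i ∈ Finset.Icc 1 (n - j),
        (-1 : ℤ) ^ (n + i - j) * ((n - j - 1).choose (i - 1)) *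
          ((s * d * i + n - 1).choose (n - 1)) := by
  rcases lt_or_ge j n with h | h
  · rw [sum_Icc_neg_one_pow_mul_choose_eq_fwdDiff_iter h]
    exact fwdDiff_iter_choose_add_nonneg _ (by omega) _
  · simp [Nat.sub_eq_zero_of_le h]

/-- Nonnegativity of the alternating binomial sum appearing in the bound on the
`f`-vector of a tropical variety. -/
theorem f_vector_bound_nonneg (n s d j : ℕ) (hn : 2 ≤ n) (hs : 1 ≤ s) (hd : 1 ≤ d)
    (hj : j ≤ n - 1) :
    0 ≤ ∑ i ∈ Finset.Icc 1 (n - j),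
        (-1 : ℤ) ^ (n + i - j) * ((n - j - 1).choose (i - 1)) *
          ((s * d * i + n - 1).choose (n - 1)) :=
  f_vector_bound_nonneg_general n s d j
end
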